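/- arXiv:1907.07657 — 2 statements merged into one kernel-verified Lean document; each statement's English description precedes it below -/
import Mathlib

section
/- With K_m the Nyström operator with kernel κ, if ∂κ/∂u ∈ C^d([0,1]²×ℝ) and v ∈ C^d([0,1]), then ‖K'(φ)v − K_m'(φ)v‖_∞ ≤ C (max_{0≤j≤d} ‖v^{(j)}‖_∞) m^{−d}, where K'(φ) is the Fréchet derivative of the Urysohn operator K at φ, given by (K'(φ)v)(s) = ∫₀¹ ∂κ/∂u(s,t,φ(t)) v(t) dt. -/
/-!
By Faà di Bruno and compactness, the derivatives of order `≤ d` of `t ↦ ℓ s t (φ t)` are bounded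
on `[0,1]` by a constant `B` independent of `s ∈ [0,1]`; by Leibniz the `d`-th derivative of the
integrand `t ↦ ℓ s t (φ t) * v t` is then at most `2^d B M`, and the quadrature error bound for
`d`-times differentiable integrands gives the rate `m^{-d}`.
-/

open Set
open scoped Pointwise

theorem IsCompact.exists_bound_norm_iteratedFDeriv {E F : Type*} [NormedAddCommGroup E]
    [NormedSpace ℝ E] [NormedAddCommGroup F] [NormedSpace ℝ F] {f : E → F} {n : ℕ}
    {K : Set E} (hK : IsCompact K) (hf : ContDiff ℝ n f) :
    ∃ C, ∀ i ≤ n, ∀ x ∈ K, ‖iteratedFDeriv ℝ i f x‖ ≤ C := by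
  have hsum : ContinuousOn (fun x => ∑ i ∈ Finset.range (n + 1), ‖iteratedFDeriv ℝ i f x‖) K :=
    (continuous_finsetSum _ fun i hi => (hf.continuous_iteratedFDeriv
      (by exact_mod_cast Finset.mem_range_succ_iff.mp hi)).norm).continuousOn
  obtain ⟨C, hC⟩ := hK.exists_bound_of_continuousOn hsum
  refine ⟨C, fun i hi x hx => ?_⟩
  calc ‖iteratedFDeriv ℝ i f x‖
      ≤ ∑ j ∈ Finset.range (n + 1), ‖iteratedFDeriv ℝ j f x‖ :=
        Finset.single_le_sum (f := fun j => ‖iteratedFDeriv ℝ j f x‖)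
          (fun _ _ => norm_nonneg _) (Finset.mem_range_succ_iff.mpr hi)
    _ ≤ C := (le_abs_self _).trans (hC x hx)

/-- Uniform in `a` because the derivatives of positive order of `t ↦ a + c t` do not depend
on `a`. -/
theorem exists_bound_norm_iteratedFDeriv_comp_const_add {F G : Type*} [NormedAddCommGroup F]
    [NormedSpace ℝ F] [NormedAddCommGroup G] [NormedSpace ℝ G] {g : F → G} {c : ℝ → F}
    {n : ℕ} (hg : ContDiff ℝ n g) (hc : ContDiff ℝ n c) {A : Set F} (hA : IsCompact A)
    {I : Set ℝ} (hI : IsCompact I) :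
    ∃ B, ∀ a ∈ A, ∀ t ∈ I, ∀ i ≤ n, ‖iteratedFDeriv ℝ i (fun t => g (a + c t)) t‖ ≤ B := by
  obtain ⟨C, hC⟩ := (hA.add (hI.image hc.continuous)).exists_bound_norm_iteratedFDeriv hg
  obtain ⟨D, hD⟩ := hI.exists_bound_norm_iteratedFDeriv hc
  refine ⟨n.factorial * C * max 1 D ^ n, fun a ha t ht i hi => ?_⟩
  have hmem : a + c t ∈ A + c '' I := add_mem_add ha (mem_image_of_mem c ht)
  have hC₀ : 0 ≤ C := (norm_nonneg _).trans (hC 0 (Nat.zero_le n) _ hmem)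
  have hcurve : ∀ j, 1 ≤ j → j ≤ i →
      ‖iteratedFDeriv ℝ j (fun t => a + c t) t‖ ≤ max 1 D ^ j := by
    intro j hj₁ hji
    rw [norm_iteratedFDeriv_eq_norm_iteratedDeriv, iteratedDeriv_const_add (by omega),
      ← norm_iteratedFDeriv_eq_norm_iteratedDeriv]
    exact (hD j (hji.trans hi) t ht).trans
      ((le_max_right 1 D).trans (le_self_pow₀ (le_max_left 1 D) (by omega)))
  calc ‖iteratedFDeriv ℝ i (g ∘ fun t => a + c t) t‖
      ≤ i.factorial * C * max 1 D ^ i :=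
        norm_iteratedFDeriv_comp_le hg (contDiff_const.add hc) (by exact_mod_cast hi) t
          (fun j hj => hC j (hj.trans hi) _ hmem) hcurve
    _ ≤ n.factorial * C * max 1 D ^ n := by
        gcongr
        exact le_max_left 1 D

theorem norm_iteratedFDeriv_mul_le_two_pow_mul {E A : Type*} [NormedAddCommGroup E]
    [NormedSpace ℝ E] [NormedRing A] [NormedAlgebra ℝ A] {f g : E → A} {n : ℕ}
    (hf : ContDiff ℝ n f) (hg : ContDiff ℝ n g) {x : E} {B M : ℝ}
    (hfB : ∀ i ≤ n, ‖iteratedFDeriv ℝ i f x‖ ≤ B)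
    (hgM : ∀ i ≤ n, ‖iteratedFDeriv ℝ i g x‖ ≤ M) :
    ‖iteratedFDeriv ℝ n (fun y => f y * g y) x‖ ≤ 2 ^ n * B * M := by
  have hB₀ : 0 ≤ B := (norm_nonneg _).trans (hfB 0 (Nat.zero_le n))
  calc ‖iteratedFDeriv ℝ n (fun y => f y * g y) x‖
      ≤ ∑ i ∈ Finset.range (n + 1), (n.choose i : ℝ) *
          ‖iteratedFDeriv ℝ i f x‖ * ‖iteratedFDeriv ℝ (n - i) g x‖ :=
        norm_iteratedFDeriv_mul_le hf hg x le_rfl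
    _ ≤ ∑ i ∈ Finset.range (n + 1), (n.choose i : ℝ) * B * M := by
        gcongr with i hi
        · exact hfB i (Finset.mem_range_succ_iff.mp hi)
        · exact hgM (n - i) (Nat.sub_le n i)
    _ = 2 ^ n * B * M := by
        rw [← Finset.sum_mul, ← Finset.sum_mul, ← Nat.cast_sum, Nat.sum_range_choose]
        push_cast
        ring

theorem stmt4_general (ρ d : ℕ) (μ ω : Fin ρ → ℝ)
    (ℓ : ℝ → ℝ → ℝ → ℝ) (φ : ℝ → ℝ) (C₁ : ℝ)
    (hℓ : ContDiff ℝ d (fun p : ℝ × ℝ × ℝ => ℓ p.1 p.2.1 p.2.2))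
    (hφ : ContDiff ℝ d φ)
    (hquad : ∀ m : ℕ, 1 ≤ m → ∀ f : ℝ → ℝ, ContDiff ℝ d f → ∀ M : ℝ,
      (∀ t ∈ Icc (0:ℝ) 1, |iteratedDeriv d f t| ≤ M) →
      |(∫ t in (0:ℝ)..1, f t) -
        (1/(m:ℝ)) * ∑ j ∈ Finset.range m, ∑ i, ω i * f (((j:ℝ) + μ i)/m)|
        ≤ C₁ * M * ((m:ℝ)^d)⁻¹) :
    ∃ C, ∀ m : ℕ, 1 ≤ m → ∀ v : ℝ → ℝ, ContDiff ℝ d v → ∀ M : ℝ,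
      (∀ j ≤ d, ∀ t ∈ Icc (0:ℝ) 1, |iteratedDeriv j v t| ≤ M) →
      ∀ s ∈ Icc (0:ℝ) 1,
      |(∫ t in (0:ℝ)..1, ℓ s t (φ t) * v t) -
        (1/(m:ℝ)) * ∑ j ∈ Finset.range m, ∑ i,
          ω i * ℓ s (((j:ℝ) + μ i)/m) (φ (((j:ℝ) + μ i)/m)) * v (((j:ℝ) + μ i)/m)|
        ≤ C * M * ((m:ℝ)^d)⁻¹ := by
  have hgraph : ∀ s : ℝ, ContDiff ℝ d fun t : ℝ => (s, t, φ t) :=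
    fun s => contDiff_const.prodMk (contDiff_id.prodMk hφ)
  obtain ⟨B, hB⟩ := exists_bound_norm_iteratedFDeriv_comp_const_add hℓ (hgraph 0)
    (isCompact_Icc.image (continuous_id.prodMk continuous_const : Continuous
      fun s : ℝ => (s, (0 : ℝ), (0 : ℝ)))) (isCompact_Icc (a := (0 : ℝ)) (b := 1))
  have hkernel : ∀ s ∈ Icc (0:ℝ) 1, ∀ t ∈ Icc (0:ℝ) 1, ∀ i ≤ d,
      ‖iteratedFDeriv ℝ i (fun t => ℓ s t (φ t)) t‖ ≤ B := by
    intro s hs t ht i hi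
    simpa using hB _ (mem_image_of_mem _ hs) t ht i hi
  refine ⟨C₁ * (2 ^ d * B), fun m hm v hv M hM s hs => ?_⟩
  have hprod : ∀ t ∈ Icc (0:ℝ) 1,
      |iteratedDeriv d (fun t => ℓ s t (φ t) * v t) t| ≤ 2 ^ d * B * M := by
    intro t ht
    rw [← Real.norm_eq_abs, ← norm_iteratedFDeriv_eq_norm_iteratedDeriv]
    refine norm_iteratedFDeriv_mul_le_two_pow_mul (hℓ.comp (hgraph s)) hv
      (hkernel s hs t ht) fun i hi => ?_
    rw [norm_iteratedFDeriv_eq_norm_iteratedDeriv]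
    exact hM i hi t ht
  have hquad' := hquad m hm _ ((hℓ.comp (hgraph s)).mul hv) _ hprod
  simp only [mul_assoc] at hquad' ⊢
  exact hquad'

/-- Error between the Fréchet derivative K'(φ)v (a linear integral operator
with kernel ℓ = ∂κ/∂u) and its Nyström discretization:
‖K'(φ)v − K_m'(φ)v‖_∞ ≤ C (max_{0≤j≤d} ‖v^{(j)}‖_∞) m^{−d}. -/
theorem stmt4 (ρ d : ℕ) (hd : 1 ≤ d) (μ ω : Fin ρ → ℝ)
    (hμ : ∀ i, μ i ∈ Icc (0:ℝ) 1)
    (κ ℓ : ℝ → ℝ → ℝ → ℝ) (φ : ℝ → ℝ) (C₁ : ℝ)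
    (hder : ∀ s t u : ℝ, HasDerivAt (fun w => κ s t w) (ℓ s t u) u)
    (hℓ : ContDiff ℝ d (fun p : ℝ × ℝ × ℝ => ℓ p.1 p.2.1 p.2.2))
    (hφ : ContDiff ℝ d φ)
    (hquad : ∀ m : ℕ, 1 ≤ m → ∀ f : ℝ → ℝ, ContDiff ℝ d f → ∀ M : ℝ,
      (∀ t ∈ Icc (0:ℝ) 1, |iteratedDeriv d f t| ≤ M) →
      |(∫ t in (0:ℝ)..1, f t) -
        (1/(m:ℝ)) * ∑ j ∈ Finset.range m, ∑ i, ω i * f (((j:ℝ) + μ i)/m)|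
        ≤ C₁ * M * ((m:ℝ)^d)⁻¹) :
    ∃ C, ∀ m : ℕ, 1 ≤ m → ∀ v : ℝ → ℝ, ContDiff ℝ d v → ∀ M : ℝ,
      (∀ j ≤ d, ∀ t ∈ Icc (0:ℝ) 1, |iteratedDeriv j v t| ≤ M) →
      ∀ s ∈ Icc (0:ℝ) 1,
      |(∫ t in (0:ℝ)..1, ℓ s t (φ t) * v t) -
        (1/(m:ℝ)) * ∑ j ∈ Finset.range m, ∑ i,
          ω i * ℓ s (((j:ℝ) + μ i)/m) (φ (((j:ℝ) + μ i)/m)) * v (((j:ℝ) + μ i)/m)|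
        ≤ C * M * ((m:ℝ)^d)⁻¹ :=
  stmt4_general ρ d μ ω ℓ φ C₁ hℓ hφ hquad
end

section
/- Suppose z̃_n − φ_m = α n^{−4r} + ρ_n with ‖ρ_n‖_∞ ≤ C n^{−2r} max{m̃^{−d}, n^{−(2r+2)}}, where α ∈ C[0,1] is independent of n. Define the Richardson extrapolant z_n^E = (2^{4r} z̃_{2n} − z̃_n)/(2^{4r} − 1). Then ‖z_n^E − φ_m‖_∞ ≤ C' n^{−2r} max{m̃^{−d}, n^{−(2r+2)}}; in particular, if m̃^{−d} ≤ n^{−(2r+2)}, then ‖z_n^E − φ_m‖_∞ = O(n^{−(4r+2)}). -/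
/-!
If `z h - φ = h^p α + ρ_h`, the combination `(q z_{h/2} - z_h)/(q - 1)` with `q = 2^p` kills the
`α` term exactly, leaving `(q ρ_{h/2} - ρ_h)/(q - 1)`. The remainder bound is nonincreasing in `n`,
so both remainders are bounded by the one at `n`, and the extrapolant inherits that bound up to
the factor `(q + 1)/(q - 1)`. When `m̃^{-d} ≤ n^{-(2r+2)}` the bound collapses to `n^{-(4r+2)}`.
-/

section Richardson

variable {E : Type*}

theorem richardson_sub_eq {𝕜 : Type*} [Field 𝕜] [AddCommGroup E] [Module 𝕜 E]
    {q c : 𝕜} (hq : q ≠ 1) {z₁ z₂ φ α ρ₁ ρ₂ : E}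
    (hz₁ : z₁ - φ = (q * c) • α + ρ₁) (hz₂ : z₂ - φ = c • α + ρ₂) :
    (q - 1)⁻¹ • (q • z₂ - z₁) - φ = (q - 1)⁻¹ • (q • ρ₂ - ρ₁) := by
  have hq' : q - 1 ≠ 0 := sub_ne_zero.mpr hq
  rw [sub_eq_iff_eq_add.mp hz₁, sub_eq_iff_eq_add.mp hz₂]
  match_scalars <;> field_simp <;> ring

theorem norm_richardson_remainder_le [SeminormedAddCommGroup E] [NormedSpace ℝ E]
    {q B : ℝ} (hq : 1 < q) {ρ₁ ρ₂ : E} (hρ₁ : ‖ρ₁‖ ≤ B) (hρ₂ : ‖ρ₂‖ ≤ B) :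
    ‖(q - 1)⁻¹ • (q • ρ₂ - ρ₁)‖ ≤ (q - 1)⁻¹ * (q + 1) * B := by
  have hq₀ : 0 < q - 1 := sub_pos.mpr hq
  calc ‖(q - 1)⁻¹ • (q • ρ₂ - ρ₁)‖ ≤ (q - 1)⁻¹ * (q * ‖ρ₂‖ + ‖ρ₁‖) := by
        rw [norm_smul, Real.norm_of_nonneg (inv_nonneg.mpr hq₀.le)]
        gcongr
        refine (norm_sub_le _ _).trans ?_
        rw [norm_smul, Real.norm_of_nonneg (by linarith)]
    _ ≤ (q - 1)⁻¹ * (q * B + B) := by gcongr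
    _ = (q - 1)⁻¹ * (q + 1) * B := by ring

end Richardson

theorem mul_inv_pow_mul_max_inv_pow_le_of_le {C e x y : ℝ} (hC : 0 ≤ C) (hx : 0 < x)
    (hxy : x ≤ y) (a b : ℕ) :
    C * (y ^ a)⁻¹ * max e (y ^ b)⁻¹ ≤ C * (x ^ a)⁻¹ * max e (x ^ b)⁻¹ := by
  have hy : 0 < y := hx.trans_le hxy
  gcongr

theorem stmt19_general {X : Type*} [NormedAddCommGroup X] [NormedSpace ℝ X]
    (r : ℕ) (hr : 1 ≤ r) (zt : ℕ → X) (φm α : X) (ρ : ℕ → X) (em C : ℝ)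
    (hC : 0 ≤ C)
    (hexp : ∀ n : ℕ, 1 ≤ n → zt n - φm = ((n:ℝ)^(4*r))⁻¹ • α + ρ n)
    (hρ : ∀ n : ℕ, 1 ≤ n →
      ‖ρ n‖ ≤ C * ((n:ℝ)^(2*r))⁻¹ * max em (((n:ℝ)^(2*r+2))⁻¹)) :
    ∃ C', (∀ n : ℕ, 1 ≤ n →
      ‖(((2:ℝ)^(4*r) - 1)⁻¹) • (((2:ℝ)^(4*r)) • zt (2*n) - zt n) - φm‖
        ≤ C' * ((n:ℝ)^(2*r))⁻¹ * max em (((n:ℝ)^(2*r+2))⁻¹))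
    ∧ (∀ n : ℕ, 1 ≤ n → em ≤ ((n:ℝ)^(2*r+2))⁻¹ →
      ‖(((2:ℝ)^(4*r) - 1)⁻¹) • (((2:ℝ)^(4*r)) • zt (2*n) - zt n) - φm‖
        ≤ C' * ((n:ℝ)^(4*r+2))⁻¹) := by
  set q : ℝ := 2 ^ (4 * r)
  have hq : 1 < q := one_lt_pow₀ one_lt_two (by omega)
  have hbound : ∀ n : ℕ, 1 ≤ n → ‖(q - 1)⁻¹ • (q • zt (2 * n) - zt n) - φm‖
      ≤ (q - 1)⁻¹ * (q + 1) * C * ((n:ℝ)^(2*r))⁻¹ * max em (((n:ℝ)^(2*r+2))⁻¹) := by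
    intro n hn
    have hn₀ : (0:ℝ) < n := by exact_mod_cast hn
    have hscale : ((n:ℝ) ^ (4 * r))⁻¹ = q * (((2 * n : ℕ) : ℝ) ^ (4 * r))⁻¹ := by
      push_cast
      rw [mul_pow, mul_inv, ← mul_assoc, mul_inv_cancel₀ (by positivity), one_mul]
    rw [richardson_sub_eq hq.ne' (hscale ▸ hexp n hn) (hexp (2 * n) (by omega))]
    have hρ₂ := (hρ (2 * n) (by omega)).trans <|
      mul_inv_pow_mul_max_inv_pow_le_of_le hC hn₀ (by push_cast; linarith) (2 * r) (2 * r + 2)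
    simpa only [mul_assoc] using norm_richardson_remainder_le hq (hρ n hn) hρ₂
  refine ⟨(q - 1)⁻¹ * (q + 1) * C, hbound, fun n hn hem => ?_⟩
  have hpow : ((n:ℝ) ^ (4 * r + 2))⁻¹ = ((n:ℝ) ^ (2 * r))⁻¹ * ((n:ℝ) ^ (2 * r + 2))⁻¹ := by
    rw [← mul_inv, ← pow_add]; ring_nf
  simpa only [hpow, max_eq_right hem, mul_assoc] using hbound n hn

/-- Richardson extrapolation: if z̃_n − φ_m = n^{−4r} α + ρ_n with
‖ρ_n‖ ≤ C n^{−2r} max{m̃^{−d}, n^{−(2r+2)}}, then the extrapolant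
z_n^E = (2^{4r} z̃_{2n} − z̃_n)/(2^{4r} − 1) satisfies
‖z_n^E − φ_m‖ ≤ C' n^{−2r} max{m̃^{−d}, n^{−(2r+2)}}; in particular, if
m̃^{−d} ≤ n^{−(2r+2)}, then ‖z_n^E − φ_m‖ = O(n^{−(4r+2)}). -/
theorem stmt19 {X : Type*} [NormedAddCommGroup X] [NormedSpace ℝ X]
    (r : ℕ) (hr : 1 ≤ r) (zt : ℕ → X) (φm α : X) (ρ : ℕ → X) (em C : ℝ)
    (hem : 0 ≤ em) (hC : 0 ≤ C)
    (hexp : ∀ n : ℕ, 1 ≤ n → zt n - φm = ((n:ℝ)^(4*r))⁻¹ • α + ρ n)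
    (hρ : ∀ n : ℕ, 1 ≤ n →
      ‖ρ n‖ ≤ C * ((n:ℝ)^(2*r))⁻¹ * max em (((n:ℝ)^(2*r+2))⁻¹)) :
    ∃ C', (∀ n : ℕ, 1 ≤ n →
      ‖(((2:ℝ)^(4*r) - 1)⁻¹) • (((2:ℝ)^(4*r)) • zt (2*n) - zt n) - φm‖
        ≤ C' * ((n:ℝ)^(2*r))⁻¹ * max em (((n:ℝ)^(2*r+2))⁻¹))
    ∧ (∀ n : ℕ, 1 ≤ n → em ≤ ((n:ℝ)^(2*r+2))⁻¹ →
      ‖(((2:ℝ)^(4*r) - 1)⁻¹) • (((2:ℝ)^(4*r)) • zt (2*n) - zt n) - φm‖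
        ≤ C' * ((n:ℝ)^(4*r+2))⁻¹) :=
  stmt19_general r hr zt φm α ρ em C hC hexp hρ
end
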